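/- Let V be a finite-dimensional complex inner product space, and let A : V → V be linear with adjoint A*. Suppose V = V_0 ⊕ ... ⊕ V_k is an orthogonal decomposition with A(V_p) ⊆ V_{p+1} (indices with V_{k+1} = 0). Let P_p denote the orthogonal projection onto V_p and a_p = trace(P_{p+1} A P_p A* P_{p+1}) (the squared Hilbert–Schmidt norm of the component A_p : V_p → V_{p+1}), with a_{-1} = a_k = 0. Then the Hilbert–Schmidt norm of the commutator [A*, A] = A*A - AA* satisfies ‖[A*,A]‖_{HS} ≥ (Σ_{p=0}^{k} |a_p - a_{p-1}|) / √(dim V). -/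

import Mathlib

open LinearMap Module

/-- The Hilbert–Schmidt norm of an endomorphism: √(trace (B* B)). -/
noncomputable def hsNorm {V : Type*} [NormedAddCommGroup V] [InnerProductSpace ℂ V]
    [FiniteDimensional ℂ V] (B : V →ₗ[ℂ] V) : ℝ :=
  Real.sqrt ((LinearMap.trace ℂ V (LinearMap.adjoint B ∘ₗ B)).re)

/-- The orthogonal projection onto a subspace, as an endomorphism of the ambient space. -/
noncomputable def projOn {V : Type*} [NormedAddCommGroup V] [InnerProductSpace ℂ V]
    [FiniteDimensional ℂ V] (W : Submodule ℂ V) : V →ₗ[ℂ] V :=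
  W.subtype ∘ₗ (W.orthogonalProjectionOnto).toLinearMap

/-! Write `P_p` for the projection onto `V_p` and `C = [A*, A]`. Since `A` maps `V_p` into
`V_{p+1}` and only `V_{p-1}` into `V_p`, the compression `P_p C P_p` has trace
`‖A P_p‖² - ‖P_p A‖² = a_p - a_{p-1}`. Cauchy–Schwarz for the Hilbert–Schmidt inner product gives
`|tr (P_p C P_p)| ≤ ‖P_p‖ ‖P_p C P_p‖`, and a second Cauchy–Schwarz over `p` together with
`∑ ‖P_p‖² = ∑ dim V_p ≤ dim V` and Bessel's `∑ ‖P_p C P_p‖² ≤ ‖C‖²` gives the bound. -/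

open scoped InnerProductSpace

section

variable {V : Type*} [NormedAddCommGroup V] [InnerProductSpace ℂ V] [FiniteDimensional ℂ V]

section Projection

variable (W : Submodule ℂ V)

lemma projOn_apply_mem (x : V) : projOn W x ∈ W := W.starProjection_apply_mem x

variable {W} in
lemma projOn_apply_of_mem {x : V} (hx : x ∈ W) : projOn W x = x :=
  W.starProjection_eq_self_iff.mpr hx

variable {W} in
lemma projOn_apply_of_mem_orthogonal {x : V} (hx : x ∈ Wᗮ) : projOn W x = 0 :=
  W.starProjection_apply_eq_zero_iff.mpr hx

lemma adjoint_projOn : adjoint (projOn W) = projOn W :=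
  W.starProjection_isSymmetric.adjoint_eq

lemma projOn_comp_projOn : projOn W ∘ₗ projOn W = projOn W :=
  LinearMap.ext fun x => projOn_apply_of_mem (projOn_apply_mem W x)

lemma norm_projOn_apply_le (x : V) : ‖projOn W x‖ ≤ ‖x‖ :=
  W.norm_starProjection_apply_le x

end Projection

section HilbertSchmidt

noncomputable def hsNormSq (B : V →ₗ[ℂ] V) : ℝ :=
  (trace ℂ V (adjoint B ∘ₗ B)).re

lemma re_trace_adjoint_comp_eq_sum {ι : Type*} [Fintype ι] (b : OrthonormalBasis ι ℂ V)
    (S T : V →ₗ[ℂ] V) : (trace ℂ V (adjoint S ∘ₗ T)).re = ∑ i, (⟪S (b i), T (b i)⟫_ℂ).re := by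
  simp only [trace_eq_sum_inner _ b, comp_apply, adjoint_inner_right, Complex.re_sum]

lemma hsNormSq_eq_sum {ι : Type*} [Fintype ι] (b : OrthonormalBasis ι ℂ V) (B : V →ₗ[ℂ] V) :
    hsNormSq B = ∑ i, ‖B (b i)‖ ^ 2 := by
  simp only [hsNormSq, re_trace_adjoint_comp_eq_sum b, inner_self_eq_norm_sq_to_K]
  norm_cast

lemma hsNormSq_nonneg (B : V →ₗ[ℂ] V) : 0 ≤ hsNormSq B := by
  rw [hsNormSq_eq_sum (stdOrthonormalBasis ℂ V)]
  positivity

lemma hsNorm_sq (B : V →ₗ[ℂ] V) : hsNorm B ^ 2 = hsNormSq B :=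
  Real.sq_sqrt (hsNormSq_nonneg B)

lemma hsNormSq_id : hsNormSq (LinearMap.id : V →ₗ[ℂ] V) = finrank ℂ V := by
  simp [hsNormSq]

lemma hsNormSq_zero : hsNormSq (0 : V →ₗ[ℂ] V) = 0 := by
  simp [hsNormSq]

lemma hsNormSq_adjoint (B : V →ₗ[ℂ] V) : hsNormSq (adjoint B) = hsNormSq B := by
  rw [hsNormSq, hsNormSq, adjoint_adjoint, ← Module.End.mul_eq_comp, ← Module.End.mul_eq_comp,
    trace_mul_comm]

lemma hsNormSq_projOn_comp_le (W : Submodule ℂ V) (B : V →ₗ[ℂ] V) :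
    hsNormSq (projOn W ∘ₗ B) ≤ hsNormSq B := by
  simp only [hsNormSq_eq_sum (stdOrthonormalBasis ℂ V), comp_apply]
  gcongr
  exact norm_projOn_apply_le W _

lemma hsNormSq_comp_projOn_le (W : Submodule ℂ V) (B : V →ₗ[ℂ] V) :
    hsNormSq (B ∘ₗ projOn W) ≤ hsNormSq B := by
  rw [← hsNormSq_adjoint, ← hsNormSq_adjoint B, adjoint_comp, adjoint_projOn]
  exact hsNormSq_projOn_comp_le W _

lemma abs_re_trace_adjoint_comp_le (S T : V →ₗ[ℂ] V) :
    |(trace ℂ V (adjoint S ∘ₗ T)).re| ≤ √(hsNormSq S) * √(hsNormSq T) := by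
  set b := stdOrthonormalBasis ℂ V
  rw [re_trace_adjoint_comp_eq_sum b, hsNormSq_eq_sum b, hsNormSq_eq_sum b]
  calc |∑ i, (⟪S (b i), T (b i)⟫_ℂ).re|
      ≤ ∑ i, ‖S (b i)‖ * ‖T (b i)‖ :=
        (Finset.abs_sum_le_sum_abs _ _).trans <| Finset.sum_le_sum fun i _ =>
          (Complex.abs_re_le_norm _).trans (norm_inner_le_norm _ _)
    _ ≤ √(∑ i, ‖S (b i)‖ ^ 2) * √(∑ i, ‖T (b i)‖ ^ 2) := Real.sum_mul_le_sqrt_mul_sqrt _ _ _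

end HilbertSchmidt

section OrthogonalFamily

variable {ι : Type*} {V_ : ι → Submodule ℂ V}

lemma OrthogonalFamily.projOn_apply_eq_zero
    (horth : OrthogonalFamily ℂ (fun p => V_ p) (fun p => (V_ p).subtypeₗᵢ))
    {p q : ι} (hpq : p ≠ q) {x : V} (hx : x ∈ V_ q) : projOn (V_ p) x = 0 :=
  projOn_apply_of_mem_orthogonal fun y hy => horth hpq ⟨y, hy⟩ ⟨x, hx⟩

lemma OrthogonalFamily.sum_norm_projOn_sq_le
    (horth : OrthogonalFamily ℂ (fun p => V_ p) (fun p => (V_ p).subtypeₗᵢ))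
    (s : Finset ι) (w : V) : ∑ p ∈ s, ‖projOn (V_ p) w‖ ^ 2 ≤ ‖w‖ ^ 2 := by
  set u := ∑ p ∈ s, projOn (V_ p) w
  have hu : ‖u‖ ^ 2 = ∑ p ∈ s, ‖projOn (V_ p) w‖ ^ 2 :=
    horth.norm_sum (fun p => (V_ p).orthogonalProjectionOnto w) s
  -- `‖u‖² = re ⟪u, w⟫ ≤ ‖u‖ ‖w‖`, hence `‖u‖ ≤ ‖w‖`.
  have hinner : ‖u‖ ^ 2 = (⟪u, w⟫_ℂ).re := by
    rw [hu, sum_inner, Complex.re_sum]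
    exact Finset.sum_congr rfl fun p _ => ((V_ p).re_inner_starProjection_eq_normSq w).symm
  have hle : ‖u‖ ≤ ‖w‖ := by
    have := (Complex.re_le_norm _).trans (norm_inner_le_norm (𝕜 := ℂ) u w)
    nlinarith [norm_nonneg u, norm_nonneg w]
  rw [← hu]
  exact pow_le_pow_left₀ (norm_nonneg u) hle 2

lemma OrthogonalFamily.sum_hsNormSq_projOn_comp_le
    (horth : OrthogonalFamily ℂ (fun p => V_ p) (fun p => (V_ p).subtypeₗᵢ))
    (s : Finset ι) (B : V →ₗ[ℂ] V) : ∑ p ∈ s, hsNormSq (projOn (V_ p) ∘ₗ B) ≤ hsNormSq B := by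
  simp only [hsNormSq_eq_sum (stdOrthonormalBasis ℂ V), comp_apply]
  rw [Finset.sum_comm]
  exact Finset.sum_le_sum fun i _ => horth.sum_norm_projOn_sq_le s _

lemma OrthogonalFamily.sum_abs_re_trace_compress_le
    (horth : OrthogonalFamily ℂ (fun p => V_ p) (fun p => (V_ p).subtypeₗᵢ))
    (s : Finset ι) (C : V →ₗ[ℂ] V) :
    ∑ p ∈ s, |(trace ℂ V (projOn (V_ p) ∘ₗ C ∘ₗ projOn (V_ p))).re| ≤
      √(finrank ℂ V) * hsNorm C := by
  have hdim : ∑ p ∈ s, hsNormSq (projOn (V_ p)) ≤ finrank ℂ V := by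
    simpa [hsNormSq_id] using horth.sum_hsNormSq_projOn_comp_le s LinearMap.id
  have hblocks : ∑ p ∈ s, hsNormSq (projOn (V_ p) ∘ₗ C ∘ₗ projOn (V_ p)) ≤ hsNormSq C :=
    (Finset.sum_le_sum fun p _ => by
      simpa only [comp_assoc] using hsNormSq_comp_projOn_le (V_ p) (projOn (V_ p) ∘ₗ C)).trans
    (horth.sum_hsNormSq_projOn_comp_le s C)
  have hblock : ∀ p, |(trace ℂ V (projOn (V_ p) ∘ₗ C ∘ₗ projOn (V_ p))).re| ≤
      √(hsNormSq (projOn (V_ p))) * √(hsNormSq (projOn (V_ p) ∘ₗ C ∘ₗ projOn (V_ p))) := by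
    intro p
    have h := abs_re_trace_adjoint_comp_le (projOn (V_ p)) (projOn (V_ p) ∘ₗ C ∘ₗ projOn (V_ p))
    rwa [adjoint_projOn, ← comp_assoc, projOn_comp_projOn] at h
  calc ∑ p ∈ s, |(trace ℂ V (projOn (V_ p) ∘ₗ C ∘ₗ projOn (V_ p))).re|
      ≤ ∑ p ∈ s, √(hsNormSq (projOn (V_ p))) *
          √(hsNormSq (projOn (V_ p) ∘ₗ C ∘ₗ projOn (V_ p))) := Finset.sum_le_sum fun p _ => hblock p
    _ ≤ √(∑ p ∈ s, hsNormSq (projOn (V_ p))) *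
          √(∑ p ∈ s, hsNormSq (projOn (V_ p) ∘ₗ C ∘ₗ projOn (V_ p))) :=
        Real.sum_sqrt_mul_sqrt_le s (fun p => hsNormSq_nonneg _) (fun p => hsNormSq_nonneg _)
    _ ≤ √(finrank ℂ V) * hsNorm C :=
        mul_le_mul (Real.sqrt_le_sqrt hdim) (Real.sqrt_le_sqrt hblocks) (Real.sqrt_nonneg _)
          (Real.sqrt_nonneg _)

end OrthogonalFamily

lemma re_trace_projOn_comp_lie_comp_projOn (W : Submodule ℂ V) (A : Module.End ℂ V) :
    (trace ℂ V (projOn W ∘ₗ ⁅adjoint A, A⁆ ∘ₗ projOn W)).re =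
      hsNormSq (A ∘ₗ projOn W) - hsNormSq (projOn W ∘ₗ A) := by
  have hsq : ∀ B : Module.End ℂ V,
      (trace ℂ V (projOn W ∘ₗ (adjoint B ∘ₗ B) ∘ₗ projOn W)).re = hsNormSq (B ∘ₗ projOn W) :=
    fun B => by rw [hsNormSq, adjoint_comp, adjoint_projOn]; rfl
  have hsq' := hsq (adjoint A)
  rw [adjoint_adjoint] at hsq'
  rw [← hsNormSq_adjoint (projOn W ∘ₗ A), adjoint_comp, adjoint_projOn, Ring.lie_def,
    Module.End.mul_eq_comp, Module.End.mul_eq_comp, sub_comp, comp_sub, map_sub, Complex.sub_re,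
    hsq, hsq']

lemma DirectSum.IsInternal.linearMap_ext {ι : Type*} {R M N : Type*} [Semiring R]
    [AddCommMonoid M] [Module R M] [AddCommMonoid N] [Module R N] {W : ι → Submodule R M}
    [DecidableEq ι] (hint : DirectSum.IsInternal W) {f g : M →ₗ[R] N}
    (h : ∀ q, ∀ x ∈ W q, f x = g x) : f = g :=
  LinearMap.ext_on (s := ⋃ q, (W q : Set M))
    (by rw [← Submodule.iSup_eq_span, hint.submodule_iSup_eq_top])
    (fun x hx => by obtain ⟨q, hq⟩ := Set.mem_iUnion.mp hx; exact h q x hq)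

section Graded

variable {V_ : ℕ → Submodule ℂ V} {A : Module.End ℂ V}

lemma comp_projOn_eq_of_map_le (hA : ∀ p, Submodule.map A (V_ p) ≤ V_ (p + 1)) (p : ℕ) :
    A ∘ₗ projOn (V_ p) = projOn (V_ (p + 1)) ∘ₗ A ∘ₗ projOn (V_ p) :=
  LinearMap.ext fun x => (projOn_apply_of_mem
    (hA p (Submodule.mem_map_of_mem (projOn_apply_mem _ x)))).symm

lemma projOn_succ_comp_eq_of_map_le (hint : DirectSum.IsInternal V_)
    (horth : OrthogonalFamily ℂ (fun p => V_ p) (fun p => (V_ p).subtypeₗᵢ))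
    (hA : ∀ p, Submodule.map A (V_ p) ≤ V_ (p + 1)) (p : ℕ) :
    projOn (V_ (p + 1)) ∘ₗ A = projOn (V_ (p + 1)) ∘ₗ A ∘ₗ projOn (V_ p) := by
  refine hint.linearMap_ext fun q x hx => ?_
  obtain rfl | hqp := eq_or_ne q p
  · simp only [comp_apply, projOn_apply_of_mem hx]
  · have hAx : A x ∈ V_ (q + 1) := hA q (Submodule.mem_map_of_mem hx)
    simp only [comp_apply, horth.projOn_apply_eq_zero hqp.symm hx, map_zero,
      horth.projOn_apply_eq_zero (by omega : p + 1 ≠ q + 1) hAx]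

lemma projOn_zero_comp_eq_zero_of_map_le (hint : DirectSum.IsInternal V_)
    (horth : OrthogonalFamily ℂ (fun p => V_ p) (fun p => (V_ p).subtypeₗᵢ))
    (hA : ∀ p, Submodule.map A (V_ p) ≤ V_ (p + 1)) :
    projOn (V_ 0) ∘ₗ A = 0 :=
  hint.linearMap_ext fun q _ hx =>
    horth.projOn_apply_eq_zero q.succ_ne_zero.symm (hA q (Submodule.mem_map_of_mem hx))

end Graded

end

theorem stmt_6_general {V : Type*} [NormedAddCommGroup V] [InnerProductSpace ℂ V]
    [FiniteDimensional ℂ V] (k : ℕ) (A : Module.End ℂ V)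
    (V_ : ℕ → Submodule ℂ V)
    (hint : DirectSum.IsInternal V_)
    (horth : OrthogonalFamily ℂ (fun p => V_ p) (fun p => (V_ p).subtypeₗᵢ))
    (hA : ∀ p, Submodule.map A (V_ p) ≤ V_ (p + 1))
    -- `a p` is the squared Hilbert–Schmidt norm of the graded component
    -- `A_p = P_{p+1} ∘ A ∘ P_p`; in particular `a k = 0` since `V_{k+1} = ⊥`.
    (a : ℕ → ℝ)
    (ha : ∀ p, a p = (hsNorm (projOn (V_ (p + 1)) ∘ₗ A ∘ₗ projOn (V_ p))) ^ 2) :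
    hsNorm (⁅LinearMap.adjoint A, A⁆ : Module.End ℂ V) ≥
      (∑ p ∈ Finset.range (k + 1), |a p - (if p = 0 then 0 else a (p - 1))|) /
        Real.sqrt (Module.finrank ℂ V) := by
  have ha' : ∀ p, a p = hsNormSq (A ∘ₗ projOn (V_ p)) := fun p => by
    rw [ha, hsNorm_sq, ← comp_projOn_eq_of_map_le hA]
  have hblock : ∀ p, a p - (if p = 0 then 0 else a (p - 1)) =
      (trace ℂ V (projOn (V_ p) ∘ₗ ⁅adjoint A, A⁆ ∘ₗ projOn (V_ p))).re := by
    rintro (_ | p)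
    · rw [re_trace_projOn_comp_lie_comp_projOn, projOn_zero_comp_eq_zero_of_map_le hint horth hA,
        ha', if_pos rfl, hsNormSq_zero]
    · rw [re_trace_projOn_comp_lie_comp_projOn, projOn_succ_comp_eq_of_map_le hint horth hA,
        ha', ha, hsNorm_sq, if_neg p.succ_ne_zero, Nat.add_sub_cancel]
  have hsum := horth.sum_abs_re_trace_compress_le (Finset.range (k + 1)) ⁅adjoint A, A⁆
  simp only [← hblock] at hsum
  exact div_le_of_le_mul₀ (Real.sqrt_nonneg _) (Real.sqrt_nonneg _) (by rwa [mul_comm])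

theorem stmt_6 {V : Type*} [NormedAddCommGroup V] [InnerProductSpace ℂ V]
    [FiniteDimensional ℂ V] (k : ℕ) (A : Module.End ℂ V)
    (V_ : ℕ → Submodule ℂ V)
    (hint : DirectSum.IsInternal V_)
    (horth : OrthogonalFamily ℂ (fun p => V_ p) (fun p => (V_ p).subtypeₗᵢ))
    (htop : ∀ p, k < p → V_ p = ⊥)
    (hA : ∀ p, Submodule.map A (V_ p) ≤ V_ (p + 1))
    -- `a p` is the squared Hilbert–Schmidt norm of the graded component
    -- `A_p = P_{p+1} ∘ A ∘ P_p`; in particular `a k = 0` since `V_{k+1} = ⊥`.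
    (a : ℕ → ℝ)
    (ha : ∀ p, a p = (hsNorm (projOn (V_ (p + 1)) ∘ₗ A ∘ₗ projOn (V_ p))) ^ 2) :
    hsNorm (⁅LinearMap.adjoint A, A⁆ : Module.End ℂ V) ≥
      (∑ p ∈ Finset.range (k + 1), |a p - (if p = 0 then 0 else a (p - 1))|) /
        Real.sqrt (Module.finrank ℂ V) :=
  stmt_6_general k A V_ hint horth hA a ha
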